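/- Let (φ_α)_{α>0} be a non-linear regularizing filter such that for every κ > 0 there exists a proper, convex, lower semicontinuous s_κ : ℝ → [0,∞] with s_κ(0) = 0 and φ_α(κ,·) = prox_{α·s_κ} for all α > 0. Suppose there exist α̃, b, c > 0 such that for every κ > 0 and every x ∈ ℝ with the property that |x| ≤ z for every z ∈ ℝ satisfying φ_{α̃}(κ, z) = cκ, one has |φ_{α̃}(κ, x)| ≤ (κ²/(κ² + α̃b))·|x|. Then: (B1) for every κ > 0 and x ∈ ℝ, the map α ↦ |φ_α(κ, x)| is monotonically increasing as α decreases to 0; and (B2) with d := bc and e := 1/(2√b), for all κ, α > 0 and all x ∈ ℝ, |x| ≤ dα/κ implies |φ_α(κ, x)| ≤ (eκ/√α)·|x|. -/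
import Mathlib


open scoped ENNReal
open Filter

noncomputable section

/-- `p` is the (unique) proximal point at `x` of the `[0,∞]`-valued functional `s`. -/
def IsProxPtE (s : ℝ → ℝ≥0∞) (x p : ℝ) : Prop :=
  (∀ y : ℝ, ENNReal.ofReal ((x - p) ^ 2 / 2) + s p ≤ ENNReal.ofReal ((x - y) ^ 2 / 2) + s y) ∧
  ∀ q : ℝ, (∀ y : ℝ, ENNReal.ofReal ((x - q) ^ 2 / 2) + s q ≤
    ENNReal.ofReal ((x - y) ^ 2 / 2) + s y) → q = p

/-- Convexity for `[0,∞]`-valued functions on `ℝ`. -/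
def ENNConvexOn (s : ℝ → ℝ≥0∞) : Prop :=
  ∀ x y : ℝ, ∀ a b : ℝ, 0 ≤ a → 0 ≤ b → a + b = 1 →
    s (a * x + b * y) ≤ ENNReal.ofReal a * s x + ENNReal.ofReal b * s y

/-- A non-linear regularizing filter: `φ α κ` is (F1) monotone, (F2) nonexpansive,
(F3) zero at zero, and (F4) converges pointwise to the identity as `α → 0`. -/
def IsRegFilter (φ : ℝ → ℝ → ℝ → ℝ) : Prop :=
  (∀ α > (0 : ℝ), ∀ κ > (0 : ℝ), Monotone (φ α κ)) ∧
  (∀ α > (0 : ℝ), ∀ κ > (0 : ℝ), ∀ x y : ℝ, |φ α κ x - φ α κ y| ≤ |x - y|) ∧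
  (∀ α > (0 : ℝ), ∀ κ > (0 : ℝ), φ α κ 0 = 0) ∧
  (∀ κ > (0 : ℝ), ∀ c : ℝ,
    Tendsto (fun α => φ α κ c) (nhdsWithin 0 (Set.Ioi 0)) (nhds c))

/-! ### Auxiliary lemmas -/

section Basic
variable {f : ℝ → ℝ} (hm : Monotone f) (hne : ∀ x y : ℝ, |f x - f y| ≤ |x - y|)
  (h0 : f 0 = 0)
include hm hne h0

lemma fb_nonneg {x : ℝ} (hx : 0 ≤ x) : 0 ≤ f x ∧ f x ≤ x := by
  constructor
  · have := hm hx; rwa [h0] at this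
  · have := hne x 0
    rw [h0, sub_zero, sub_zero] at this
    have h1 : f x ≤ |f x| := le_abs_self _
    have h2 : |x| = x := abs_of_nonneg hx
    linarith [h1, h2 ▸ this]

lemma fb_nonpos {x : ℝ} (hx : x ≤ 0) : x ≤ f x ∧ f x ≤ 0 := by
  constructor
  · have := hne x 0
    rw [h0, sub_zero, sub_zero] at this
    have h1 : -(f x) ≤ |f x| := neg_le_abs _
    have h2 : |x| = -x := abs_of_nonpos hx
    linarith [h1, h2 ▸ this]
  · have := hm hx; rwa [h0] at this

lemma fb_decomp (x : ℝ) : |x| = |f x| + |x - f x| := by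
  rcases le_total 0 x with hx | hx
  · obtain ⟨h1, h2⟩ := fb_nonneg hm hne h0 hx
    rw [abs_of_nonneg hx, abs_of_nonneg h1, abs_of_nonneg (by linarith)]; ring
  · obtain ⟨h1, h2⟩ := fb_nonpos hm hne h0 hx
    rw [abs_of_nonpos hx, abs_of_nonpos h2, abs_of_nonpos (by linarith)]; ring

lemma fb_abs_le (x : ℝ) : |f x| ≤ |x| := by
  have := fb_decomp hm hne h0 x
  have := abs_nonneg (x - f x)
  linarith

lemma fb_abs_xt {x r : ℝ} (hr : 0 ≤ r) : |f x + r * (x - f x)| = |f x| + r * |x - f x| := by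
  rcases le_total 0 x with hx | hx
  · obtain ⟨h1, h2⟩ := fb_nonneg hm hne h0 hx
    rw [abs_of_nonneg (by nlinarith), abs_of_nonneg h1, abs_of_nonneg (by linarith)]
  · obtain ⟨h1, h2⟩ := fb_nonpos hm hne h0 hx
    rw [abs_of_nonpos (by nlinarith), abs_of_nonpos h2, abs_of_nonpos (by linarith)]
    ring

set_option linter.unusedSectionVars false in
lemma fb_cont : Continuous f := by
  have : LipschitzWith 1 f := by
    refine LipschitzWith.of_dist_le_mul fun x y => ?_
    rw [Real.dist_eq, Real.dist_eq]
    simpa using hne x y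
  exact this.continuous

/-- same-side monotonicity of `x - f x` (in absolute value). -/
lemma fb_D_mono {x y : ℝ} (hy : (0 ≤ y ∧ y ≤ x) ∨ (x ≤ y ∧ y ≤ 0)) :
    |y - f y| ≤ |x - f x| := by
  rcases hy with ⟨h1, h2⟩ | ⟨h1, h2⟩
  · obtain ⟨hy1, hy2⟩ := fb_nonneg hm hne h0 h1
    obtain ⟨hx1, hx2⟩ := fb_nonneg hm hne h0 (le_trans h1 h2)
    have hmono := hm h2
    have := hne x y
    have h3 : f x - f y ≤ |x - y| := le_trans (le_abs_self _) this
    rw [abs_of_nonneg (by linarith : (0:ℝ) ≤ x - y)] at h3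
    rw [abs_of_nonneg (by linarith), abs_of_nonneg (by linarith)]
    linarith
  · obtain ⟨hy1, hy2⟩ := fb_nonpos hm hne h0 h2
    obtain ⟨hx1, hx2⟩ := fb_nonpos hm hne h0 (le_trans h1 h2)
    have hmono := hm h1
    have := hne y x
    have h3 : f y - f x ≤ |y - x| := le_trans (le_abs_self _) this
    rw [abs_of_nonneg (by linarith : (0:ℝ) ≤ y - x)] at h3
    rw [abs_of_nonpos (by linarith), abs_of_nonpos (by linarith)]
    linarith

/-- intermediate value on the same side. -/
lemma fb_ivt {x v : ℝ} (hv0 : 0 ≤ v) (hv : v ≤ |f x|) :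
    ∃ y : ℝ, ((0 ≤ y ∧ y ≤ x) ∨ (x ≤ y ∧ y ≤ 0)) ∧ |f y| = v := by
  rcases le_total 0 x with hx | hx
  · obtain ⟨h1, _⟩ := fb_nonneg hm hne h0 hx
    rw [abs_of_nonneg h1] at hv
    have := intermediate_value_Icc hx (fb_cont hm hne h0).continuousOn
    have hvmem : v ∈ Set.Icc (f 0) (f x) := by rw [h0]; exact ⟨hv0, hv⟩
    obtain ⟨y, hy, hfy⟩ := this hvmem
    exact ⟨y, Or.inl ⟨hy.1, hy.2⟩, by rw [hfy, abs_of_nonneg hv0]⟩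
  · obtain ⟨_, h2⟩ := fb_nonpos hm hne h0 hx
    rw [abs_of_nonpos h2] at hv
    have := intermediate_value_Icc hx (fb_cont hm hne h0).continuousOn
    have hvmem : -v ∈ Set.Icc (f x) (f 0) := by rw [h0]; exact ⟨by linarith, by linarith⟩
    obtain ⟨y, hy, hfy⟩ := this hvmem
    refine ⟨y, Or.inr ⟨hy.1, hy.2⟩, ?_⟩
    rw [hfy, abs_neg, abs_of_nonneg hv0]

end Basic

section Prox
variable {s : ℝ → ℝ≥0∞} {α x p : ℝ}

/-- finiteness of s at a prox point -/
lemma prox_fin (hα : 0 < α) (hs0 : s 0 = 0)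
    (H : ∀ y : ℝ, ENNReal.ofReal ((x - p) ^ 2 / 2) + ENNReal.ofReal α * s p ≤
      ENNReal.ofReal ((x - y) ^ 2 / 2) + ENNReal.ofReal α * s y) :
    s p ≠ ⊤ := by
  intro htop
  have h := H 0
  rw [hs0, mul_zero, add_zero, htop] at h
  have hα' : ENNReal.ofReal α ≠ 0 := by
    simp [ENNReal.ofReal_eq_zero]; linarith
  rw [ENNReal.mul_top hα', add_top] at h
  exact (lt_irrefl ⊤ (lt_of_le_of_lt h ENNReal.ofReal_lt_top)).elim

lemma prox_real (hα : 0 < α)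
    (H : ∀ y : ℝ, ENNReal.ofReal ((x - p) ^ 2 / 2) + ENNReal.ofReal α * s p ≤
      ENNReal.ofReal ((x - y) ^ 2 / 2) + ENNReal.ofReal α * s y)
    {y : ℝ} (hp : s p ≠ ⊤) (hy : s y ≠ ⊤) :
    (x - p) ^ 2 / 2 + α * (s p).toReal ≤ (x - y) ^ 2 / 2 + α * (s y).toReal := by
  have h := H y
  have hfin1 : ENNReal.ofReal ((x - p) ^ 2 / 2) + ENNReal.ofReal α * s p ≠ ⊤ :=
    ENNReal.add_ne_top.2 ⟨ENNReal.ofReal_ne_top, ENNReal.mul_ne_top ENNReal.ofReal_ne_top hp⟩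
  have hfin2 : ENNReal.ofReal ((x - y) ^ 2 / 2) + ENNReal.ofReal α * s y ≠ ⊤ :=
    ENNReal.add_ne_top.2 ⟨ENNReal.ofReal_ne_top, ENNReal.mul_ne_top ENNReal.ofReal_ne_top hy⟩
  have := (ENNReal.toReal_le_toReal hfin1 hfin2).2 h
  rwa [ENNReal.toReal_add ENNReal.ofReal_ne_top (ENNReal.mul_ne_top ENNReal.ofReal_ne_top hp),
    ENNReal.toReal_add ENNReal.ofReal_ne_top (ENNReal.mul_ne_top ENNReal.ofReal_ne_top hy),
    ENNReal.toReal_mul, ENNReal.toReal_mul,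
    ENNReal.toReal_ofReal (by positivity : (0:ℝ) ≤ (x - p)^2/2),
    ENNReal.toReal_ofReal (by positivity : (0:ℝ) ≤ (x - y)^2/2),
    ENNReal.toReal_ofReal hα.le] at this

/-- Transfer: the prox point of `α·s` at `x` is also a prox point of `β·s` at
`p + (β/α)(x-p)` (minimizer inequality only). -/
lemma prox_transfer (hα : 0 < α) {β : ℝ} (hβ : 0 < β) (hs0 : s 0 = 0)
    (hconv : ENNConvexOn s)
    (H : ∀ y : ℝ, ENNReal.ofReal ((x - p) ^ 2 / 2) + ENNReal.ofReal α * s p ≤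
      ENNReal.ofReal ((x - y) ^ 2 / 2) + ENNReal.ofReal α * s y) :
    ∀ y : ℝ, ENNReal.ofReal ((p + (β/α)*(x - p) - p) ^ 2 / 2) + ENNReal.ofReal β * s p ≤
      ENNReal.ofReal ((p + (β/α)*(x - p) - y) ^ 2 / 2) + ENNReal.ofReal β * s y := by
  intro y
  have hp : s p ≠ ⊤ := prox_fin hα hs0 H
  by_cases hy : s y = ⊤
  · rw [hy, ENNReal.mul_top (by simp [ENNReal.ofReal_eq_zero]; linarith), add_top]
    exact le_top
  set sp := (s p).toReal with hsp
  set sy := (s y).toReal with hsy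
  have key : (p + (β/α)*(x - p) - p) ^ 2 / 2 + β * sp ≤
      (p + (β/α)*(x - p) - y) ^ 2 / 2 + β * sy := by
    set t : ℝ := min 1 (α/β) with ht
    have ht0 : 0 < t := lt_min one_pos (by positivity)
    have ht1 : t ≤ 1 := min_le_left _ _
    have htβ : t * β ≤ α := by
      have : t ≤ α/β := min_le_right _ _
      calc t * β ≤ (α/β) * β := by nlinarith
      _ = α := by field_simp
    have hconvt := hconv p y (1-t) t (by linarith) ht0.le (by ring)
    have hytfin : s ((1-t)*p + t*y) ≠ ⊤ := by
      intro htop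
      rw [htop] at hconvt
      have : ENNReal.ofReal (1-t) * s p + ENNReal.ofReal t * s y ≠ ⊤ :=
        ENNReal.add_ne_top.2 ⟨ENNReal.mul_ne_top ENNReal.ofReal_ne_top hp,
          ENNReal.mul_ne_top ENNReal.ofReal_ne_top hy⟩
      exact this (top_le_iff.1 hconvt)
    set syt := (s ((1-t)*p + t*y)).toReal with hsyt
    have hconvt' : syt ≤ (1-t) * sp + t * sy := by
      have hfin : ENNReal.ofReal (1-t) * s p + ENNReal.ofReal t * s y ≠ ⊤ :=
        ENNReal.add_ne_top.2 ⟨ENNReal.mul_ne_top ENNReal.ofReal_ne_top hp,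
          ENNReal.mul_ne_top ENNReal.ofReal_ne_top hy⟩
      have := (ENNReal.toReal_le_toReal hytfin hfin).2 hconvt
      rwa [ENNReal.toReal_add (ENNReal.mul_ne_top ENNReal.ofReal_ne_top hp)
        (ENNReal.mul_ne_top ENNReal.ofReal_ne_top hy), ENNReal.toReal_mul, ENNReal.toReal_mul,
        ENNReal.toReal_ofReal (by linarith), ENNReal.toReal_ofReal ht0.le] at this
    have hproxreal := prox_real hα H hp hytfin
    rw [← hsp, ← hsyt] at hproxreal
    have hxy : x - ((1-t)*p + t*y) = (x - p) - t*(y - p) := by ring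
    rw [hxy] at hproxreal
    have hstep : t*((y - p)*(x - p)) ≤ t*(α * (sy - sp)) + t^2*(y-p)^2/2 := by
      nlinarith [hproxreal, hconvt']
    have hstep2 : (y - p)*(x - p) ≤ α * (sy - sp) + t*(y-p)^2/2 := by
      nlinarith [hstep, ht0]
    have hβα : 0 < β/α := by positivity
    have hfinal : (β/α)*((y - p)*(x - p)) ≤ β * (sy - sp) + (y-p)^2/2 := by
      have h1 : (β/α)*((y - p)*(x - p)) ≤ (β/α)*(α * (sy - sp) + t*(y-p)^2/2) :=
        mul_le_mul_of_nonneg_left hstep2 hβα.le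
      have h2 : (β/α)*(α * (sy - sp)) = β * (sy - sp) := by field_simp
      have h3 : (β/α)*(t*(y-p)^2/2) ≤ (y-p)^2/2 := by
        have : (β/α)*t ≤ 1 := by
          rw [div_mul_eq_mul_div, div_le_one hα]
          linarith [htβ]
        nlinarith [sq_nonneg (y-p)]
      nlinarith [h1, h2, h3]
    nlinarith [hfinal]
  have hsy' : s y = ENNReal.ofReal sy := (ENNReal.ofReal_toReal hy).symm
  have hsp' : s p = ENNReal.ofReal sp := (ENNReal.ofReal_toReal hp).symm
  rw [hsy', hsp', ← ENNReal.ofReal_mul hβ.le, ← ENNReal.ofReal_mul hβ.le,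
    ← ENNReal.ofReal_add (by positivity) ?_, ← ENNReal.ofReal_add (by positivity) ?_]
  · exact ENNReal.ofReal_le_ofReal key
  · exact mul_nonneg hβ.le ENNReal.toReal_nonneg
  · exact mul_nonneg hβ.le ENNReal.toReal_nonneg

end Prox


lemma sup_trick {K M w : ℝ} (hK : 0 < K) (hM : 0 ≤ M) (hw : 0 < w)
    (h : ∀ v, 0 ≤ v → v < w → K*v ≤ M) : K*w ≤ M := by
  by_contra hcon
  push_neg at hcon
  have h1 : M/K < w := by rw [div_lt_iff₀ hK]; nlinarith
  have h2 : 0 ≤ M/K := div_nonneg hM hK.le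
  have h3 := h ((M/K + w)/2) (by linarith) (by linarith)
  have h4 : M/K < (M/K + w)/2 := by linarith
  rw [div_lt_iff₀ hK] at h4
  nlinarith

set_option maxHeartbeats 1000000 in
lemma statement6_B1 (φ : ℝ → ℝ → ℝ → ℝ)
    (hmono : ∀ α > (0 : ℝ), ∀ κ > (0 : ℝ), Monotone (φ α κ))
    (hne : ∀ α > (0 : ℝ), ∀ κ > (0 : ℝ), ∀ x y : ℝ, |φ α κ x - φ α κ y| ≤ |x - y|)
    (hzero : ∀ α > (0 : ℝ), ∀ κ > (0 : ℝ), φ α κ 0 = 0)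
    (hprox : ∀ κ > (0 : ℝ), ∃ s : ℝ → ℝ≥0∞, (∃ x, s x ≠ ⊤) ∧ ENNConvexOn s ∧
      LowerSemicontinuous s ∧ s 0 = 0 ∧
      ∀ α > (0 : ℝ), ∀ x : ℝ, IsProxPtE (fun y => ENNReal.ofReal α * s y) x (φ α κ x)) :
    ∀ κ > (0 : ℝ), ∀ x : ℝ, ∀ α β : ℝ, 0 < α → α ≤ β → |φ β κ x| ≤ |φ α κ x| := by
  intro κ hκ x α β hα hαβ
  obtain ⟨s, _, hconv, _, hs0, hproxs⟩ := hprox κ hκ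
  have hβ : 0 < β := lt_of_lt_of_le hα hαβ
  rcases eq_or_lt_of_le hαβ with heq | hlt
  · rw [heq]
  · set p := φ α κ x with hp
    set q := φ β κ x with hq
    have Hα : ∀ y : ℝ, ENNReal.ofReal ((x - p) ^ 2 / 2) + ENNReal.ofReal α * s p ≤
        ENNReal.ofReal ((x - y) ^ 2 / 2) + ENNReal.ofReal α * s y := (hproxs α hα x).1
    have Hβ : ∀ y : ℝ, ENNReal.ofReal ((x - q) ^ 2 / 2) + ENNReal.ofReal β * s q ≤
        ENNReal.ofReal ((x - y) ^ 2 / 2) + ENNReal.ofReal β * s y := (hproxs β hβ x).1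
    have hpfin := prox_fin hα hs0 Hα
    have hqfin := prox_fin hβ hs0 Hβ
    have h1 := prox_real hα Hα hpfin hqfin (y := q)
    have h2 := prox_real hβ Hβ hqfin hpfin (y := p)
    have hA : (x - p)^2 ≤ (x - q)^2 := by
      nlinarith [h1, h2, sub_pos.2 hlt, hα, hβ]
    have h3 : |x - p| ≤ |x - q| := by
      nlinarith [abs_nonneg (x - p), abs_nonneg (x - q), sq_abs (x - p), sq_abs (x - q), hA]
    have hd1 := fb_decomp (hmono α hα κ hκ) (hne α hα κ hκ) (hzero α hα κ hκ) x
    have hd2 := fb_decomp (hmono β hβ κ hκ) (hne β hβ κ hκ) (hzero β hβ κ hκ) x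
    rw [← hp] at hd1
    rw [← hq] at hd2
    linarith

set_option maxHeartbeats 2000000 in
lemma statement6_B2 (φ : ℝ → ℝ → ℝ → ℝ)
    (hmono : ∀ α > (0 : ℝ), ∀ κ > (0 : ℝ), Monotone (φ α κ))
    (hne : ∀ α > (0 : ℝ), ∀ κ > (0 : ℝ), ∀ x y : ℝ, |φ α κ x - φ α κ y| ≤ |x - y|)
    (hzero : ∀ α > (0 : ℝ), ∀ κ > (0 : ℝ), φ α κ 0 = 0)
    (hprox : ∀ κ > (0 : ℝ), ∃ s : ℝ → ℝ≥0∞, (∃ x, s x ≠ ⊤) ∧ ENNConvexOn s ∧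
      LowerSemicontinuous s ∧ s 0 = 0 ∧
      ∀ α > (0 : ℝ), ∀ x : ℝ, IsProxPtE (fun y => ENNReal.ofReal α * s y) x (φ α κ x))
    (αt b c : ℝ) (hαt : 0 < αt) (hb : 0 < b) (hc : 0 < c)
    (hA2 : ∀ κ > (0 : ℝ), ∀ x : ℝ, (∀ z : ℝ, φ αt κ z = c * κ → |x| ≤ z) →
      |φ αt κ x| ≤ κ ^ 2 / (κ ^ 2 + αt * b) * |x|) :
    ∀ κ > (0 : ℝ), ∀ α > (0 : ℝ), ∀ x : ℝ, |x| ≤ b * c * α / κ →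
      |φ α κ x| ≤ (1 / (2 * Real.sqrt b)) * κ / Real.sqrt α * |x| := by
  intro κ hκ α hα x hxle
  obtain ⟨s, _, hconv, _, hs0, hproxs⟩ := hprox κ hκ
  have hκ2 : (0:ℝ) < κ^2 := by positivity
  have hmαt := hmono αt hαt κ hκ
  have hnαt := hne αt hαt κ hκ
  have hzαt := hzero αt hαt κ hκ
  have hmα := hmono α hα κ hκ
  have hnα := hne α hα κ hκ
  have hzα := hzero α hα κ hκ
  -- the key subgradient-type bound
  have key : ∀ α' : ℝ, 0 < α' → ∀ x' : ℝ,
      (∀ z : ℝ, φ αt κ z = c*κ → |φ α' κ x'| + (αt/α')*|x' - φ α' κ x'| ≤ z) →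
      (α'*b/κ^2) * |φ α' κ x'| ≤ |x' - φ α' κ x'| := by
    intro α' hα' x' hth
    set p' := φ α' κ x' with hp'
    have H : ∀ y : ℝ, ENNReal.ofReal ((x' - p') ^ 2 / 2) + ENNReal.ofReal α' * s p' ≤
        ENNReal.ofReal ((x' - y) ^ 2 / 2) + ENNReal.ofReal α' * s y := (hproxs α' hα' x').1
    have Ht := prox_transfer hα' hαt hs0 hconv H
    set xt := p' + (αt/α')*(x' - p') with hxt
    have hid : φ αt κ xt = p' := ((hproxs αt hαt xt).2 p' Ht).symm
    have hxtabs : |xt| = |p'| + (αt/α')*|x' - p'| := by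
      rw [hxt, hp']
      exact fb_abs_xt (hmono α' hα' κ hκ) (hne α' hα' κ hκ) (hzero α' hα' κ hκ)
        (by positivity)
    have hA2' := hA2 κ hκ xt (by rw [hxtabs]; exact hth)
    rw [hid, hxtabs] at hA2'
    -- now pure algebra
    set P := |p'| with hP
    set D := |x' - p'| with hD
    have hP0 : 0 ≤ P := abs_nonneg _
    have hD0 : 0 ≤ D := abs_nonneg _
    have hpos1 : (0:ℝ) < κ^2 + αt*b := by positivity
    have h2 : P * (κ^2 + αt*b) ≤ κ^2 * (P + αt/α'*D) := by
      rw [div_mul_eq_mul_div, le_div_iff₀ hpos1] at hA2'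
      linarith
    have h5 : P*αt*b ≤ κ^2*(αt/α')*D := by nlinarith [h2]
    have h6 : P*αt*b*α' ≤ κ^2*(αt/α')*D*α' := mul_le_mul_of_nonneg_right h5 hα'.le
    have hrel : (αt/α') * α' = αt := div_mul_cancel₀ _ hα'.ne'
    have h7 : κ^2*(αt/α')*D*α' = κ^2*αt*D := by
      linear_combination κ^2*D*hrel
    rw [div_mul_eq_mul_div, div_le_iff₀ hκ2]
    nlinarith [h6, h7, hαt]
  -- every solution of φ_αt(z) = cκ is ≥ cκ
  have hsol_ge : ∀ z, φ αt κ z = c*κ → c*κ ≤ z := by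
    intro z hz
    have h1 : |φ αt κ z| ≤ |z| := fb_abs_le hmαt hnαt hzαt z
    have h2 : (0:ℝ) < c*κ := by positivity
    rw [hz, abs_of_pos h2] at h1
    rcases le_total 0 z with h | h
    · rwa [abs_of_nonneg h] at h1
    · exfalso
      have := (fb_nonpos hmαt hnαt hzαt h).2
      rw [hz] at this; linarith
  -- improved lower bound on solutions
  have haveZ : ∀ z, φ αt κ z = c*κ → c*κ + αt*(b*c/κ) ≤ z := by
    intro z hz
    set S := {w : ℝ | φ αt κ w = c*κ} with hS
    have hSne : S.Nonempty := ⟨z, hz⟩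
    have hSbdd : BddBelow S := ⟨c*κ, fun w hw => hsol_ge w hw⟩
    have hSclosed : IsClosed S :=
      IsClosed.preimage (fb_cont hmαt hnαt hzαt) isClosed_singleton
    have hmem : sInf S ∈ S := hSclosed.csInf_mem hSne hSbdd
    set zm := sInf S with hzmdef
    have hzm : φ αt κ zm = c*κ := hmem
    have hzmge : c*κ ≤ zm := hsol_ge zm hzm
    have hcκ : (0:ℝ) < c*κ := by positivity
    have hv : ∀ v, 0 ≤ v → v < c*κ → (αt*b/κ^2)*v ≤ zm - c*κ := by
      intro v hv0 hvc
      have hvle : v ≤ |φ αt κ zm| := by rw [hzm, abs_of_pos hcκ]; linarith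
      obtain ⟨y, hyside, hyv⟩ := fb_ivt hmαt hnαt hzαt hv0 hvle
      have hDy : |y - φ αt κ y| ≤ |zm - φ αt κ zm| := fb_D_mono hmαt hnαt hzαt hyside
      rw [hzm, abs_of_nonneg (by linarith : (0:ℝ) ≤ zm - c*κ)] at hDy
      have hk := key αt hαt y ?thr
      · rw [hyv] at hk
        linarith
      case thr =>
        intro z' hz'
        have hz'ge : zm ≤ z' := csInf_le hSbdd hz'
        have hself : αt/αt = 1 := div_self hαt.ne'
        rw [hyv, hself, one_mul]
        linarith
    have hzmz : zm ≤ z := csInf_le hSbdd hz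
    have hKpos : (0:ℝ) < αt*b/κ^2 := by positivity
    have hlim := sup_trick hKpos (by linarith : (0:ℝ) ≤ zm - c*κ) hcκ hv
    have hKeq : (αt*b/κ^2)*(c*κ) = αt*(b*c/κ) := by
      field_simp
    linarith [hKeq ▸ hlim]
  -- main estimate
  set p := φ α κ x with hp
  have hdecomp : |x| = |p| + |x - p| := by
    rw [hp]; exact fb_decomp hmα hnα hzα x
  have hbcα : b*c*α/κ = α*(b*c/κ) := by ring
  have main : |p| ≤ κ^2/(κ^2+α*b) * |x| := by
    have hpos2 : (0:ℝ) < κ^2 + α*b := by positivity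
    by_cases hcase : ∀ z, φ αt κ z = c*κ → |p| + (αt/α)*|x - p| ≤ z
    · have hk := key α hα x hcase
      rw [← hp] at hk
      rw [hdecomp, div_mul_eq_mul_div, le_div_iff₀ hpos2]
      have h6 := mul_le_mul_of_nonneg_right hk hκ2.le
      have h7 : (α*b/κ^2)*|p| * κ^2 = α*b*|p| := by field_simp
      nlinarith [h6, h7, abs_nonneg p, abs_nonneg (x - p)]
    · push_neg at hcase
      obtain ⟨z, hz, hlt⟩ := hcase
      have hzge := haveZ z hz
      by_cases hG : α*(b*c/κ) ≤ |x - p|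
      · have hP0 : |p| ≤ 0 := by
          rw [hbcα] at hxle
          linarith [hdecomp]
        have hPeq : |p| = 0 := le_antisymm hP0 (abs_nonneg _)
        rw [hPeq]
        positivity
      · push_neg at hG
        exfalso
        have hfr : 0 < αt/α := by positivity
        have h1 : (αt/α)*|x - p| < αt*(b*c/κ) := by
          have h := mul_lt_mul_of_pos_left hG hfr
          have he : (αt/α)*(α*(b*c/κ)) = αt*(b*c/κ) := by field_simp
          linarith [he ▸ h]
        have hPc : c*κ < |p| := by linarith
        have hAll : ∀ v, 0 ≤ v → v < c*κ → (α*b/κ^2)*v ≤ |x - p| := by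
          intro v hv0 hvc
          have hvle : v ≤ |φ α κ x| := by rw [← hp]; linarith
          obtain ⟨y, hyside, hyv⟩ := fb_ivt hmα hnα hzα hv0 hvle
          have hDy : |y - φ α κ y| ≤ |x - φ α κ x| := fb_D_mono hmα hnα hzα hyside
          rw [← hp] at hDy
          have hk := key α hα y ?thr2
          · rw [hyv] at hk; linarith
          case thr2 =>
            intro z' hz'
            have hz'ge := haveZ z' hz'
            have hDy2 : (αt/α)*|y - φ α κ y| ≤ (αt/α)*|x - p| :=
              mul_le_mul_of_nonneg_left hDy hfr.le
            rw [hyv]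
            linarith
        -- pass to the limit v → cκ
        have hKpos : (0:ℝ) < α*b/κ^2 := by positivity
        have hcκ : (0:ℝ) < c*κ := by positivity
        have hlim := sup_trick hKpos (abs_nonneg (x - p)) hcκ hAll
        have hKeq : (α*b/κ^2)*(c*κ) = α*(b*c/κ) := by
          field_simp
        linarith [hKeq ▸ hlim]
  -- conclude with AM-GM
  have hsb : Real.sqrt b ^ 2 = b := Real.sq_sqrt hb.le
  have hsa : Real.sqrt α ^ 2 = α := Real.sq_sqrt hα.le
  have hsbpos : 0 < Real.sqrt b := Real.sqrt_pos.2 hb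
  have hsapos : 0 < Real.sqrt α := Real.sqrt_pos.2 hα
  have hscalar : κ^2/(κ^2+α*b) ≤ 1/(2*Real.sqrt b)*κ/Real.sqrt α := by
    have he : 1/(2*Real.sqrt b)*κ/Real.sqrt α = κ/(2*(Real.sqrt b*Real.sqrt α)) := by
      rw [div_mul_eq_mul_div, one_mul, div_div, mul_assoc]
    have hba2 : κ*(Real.sqrt b*Real.sqrt α)^2 = κ*(b*α) := by
      rw [mul_pow, hsb, hsa]
    rw [he, div_le_div_iff₀ (by positivity) (by positivity)]
    nlinarith [mul_nonneg hκ.le (sq_nonneg (κ - Real.sqrt b*Real.sqrt α)), hba2]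
  calc |φ α κ x| = |p| := by rw [hp]
    _ ≤ κ^2/(κ^2+α*b) * |x| := main
    _ ≤ 1/(2*Real.sqrt b)*κ/Real.sqrt α * |x| :=
        mul_le_mul_of_nonneg_right hscalar (abs_nonneg x)

/-- A stationary filter (`φ_α(κ,·) = prox_{α·s_κ}`) satisfying the
variational coercivity assumption (A2) satisfies Assumption B with `d = bc`, `e = 1/(2√b)`. -/
theorem statement6 (φ : ℝ → ℝ → ℝ → ℝ) (hfilter : IsRegFilter φ)
    (hprox : ∀ κ > (0 : ℝ), ∃ s : ℝ → ℝ≥0∞, (∃ x, s x ≠ ⊤) ∧ ENNConvexOn s ∧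
      LowerSemicontinuous s ∧ s 0 = 0 ∧
      ∀ α > (0 : ℝ), ∀ x : ℝ, IsProxPtE (fun y => ENNReal.ofReal α * s y) x (φ α κ x))
    (αt b c : ℝ) (hαt : 0 < αt) (hb : 0 < b) (hc : 0 < c)
    (hA2 : ∀ κ > (0 : ℝ), ∀ x : ℝ, (∀ z : ℝ, φ αt κ z = c * κ → |x| ≤ z) →
      |φ αt κ x| ≤ κ ^ 2 / (κ ^ 2 + αt * b) * |x|) :
    (∀ κ > (0 : ℝ), ∀ x : ℝ, ∀ α β : ℝ, 0 < α → α ≤ β → |φ β κ x| ≤ |φ α κ x|) ∧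
    (∀ κ > (0 : ℝ), ∀ α > (0 : ℝ), ∀ x : ℝ, |x| ≤ b * c * α / κ →
      |φ α κ x| ≤ (1 / (2 * Real.sqrt b)) * κ / Real.sqrt α * |x|) := by
  obtain ⟨hmono, hne, hzero, _⟩ := hfilter
  exact ⟨statement6_B1 φ hmono hne hzero hprox,
    statement6_B2 φ hmono hne hzero hprox αt b c hαt hb hc hA2⟩
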